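/- Let Γ be a group, r : Γ →* GL (Fin 2) ℂ a 2-dimensional complex representation, and η : Γ →* ℂˣ a character. Assume that the character det∘r : γ ↦ det(r(γ)) is not equal to η, that there exists an η-similitude form for r, and that det∘r and η both have order 2 (each is nontrivial with trivial square). Then there exists a 1-similitude form for r (a nondegenerate bilinear form B₀ with B₀(r(γ)v, r(γ)w) = B₀(v, w) for all γ, v, w; equivalently, the representation is self-dual) if and only if the range of r is isomorphic, as a group, to DihedralGroup 4 (the dihedral group of order 8). -/

import Mathlib

open Matrix

/-- A nondegenerate bilinear form on `Fin 2 → ℂ`. -/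
def Nondeg (B : (Fin 2 → ℂ) →ₗ[ℂ] (Fin 2 → ℂ) →ₗ[ℂ] ℂ) : Prop :=
  (∀ v, (∀ w, B v w = 0) → v = 0) ∧ (∀ w, (∀ v, B v w = 0) → w = 0)

/-- A `χ`-similitude form for `r`: a nondegenerate bilinear form scaled by `χ(γ)` under
the action of each `γ`. -/
def IsSimForm {Γ : Type*} [Group Γ] (r : Γ →* GL (Fin 2) ℂ) (χ : Γ →* ℂˣ)
    (B : (Fin 2 → ℂ) →ₗ[ℂ] (Fin 2 → ℂ) →ₗ[ℂ] ℂ) : Prop :=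
  Nondeg B ∧ ∀ (γ : Γ) (v w : Fin 2 → ℂ),
    B ((r γ : Matrix (Fin 2) (Fin 2) ℂ).mulVec v) ((r γ : Matrix (Fin 2) (Fin 2) ℂ).mulVec w) =
      (χ γ : ℂ) * B v w

/-!
Bilinear forms are handled through their Gram matrices. For `2 × 2` matrices
`Rᵀ J R = det R • J`, where `J = detForm`, so the alternating part of a `χ`-similitude form is a
`det`-similitude; when `χ ≠ det` the form `M` is therefore symmetric, and a rescaling of `J M` is
a trace-zero involution `T` with `T R = (χ / det) R T` for every `R` in the image.

If `r` is self-dual, the invariant form and the `η`-form give such involutions `S` and `T`,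
twisted by the characters `det` and `η / det`. As `η` is nontrivial, `S` and `T` anticommute, so
`1, S, T, S T` is a basis of the `2 × 2` matrices and `r γ` is determined up to sign by the signs
`det γ` and `(η / det) γ`. The image thus consists of `±1, ±a, ±b, ±a b` with `a = μ S`, `μ² = -1`,
and `b = ν T`, `ν² = 1`, which satisfy the dihedral relations `a⁴ = 1`, `b² = 1`, `b a b = a⁻¹`.

Conversely, in a copy of the dihedral group of order 8 inside `GL₂(ℂ)` the square `Z` of a
rotation `A` of order 4 is central of order 2. If `Z` were not scalar, its centraliser
`span {1, Z}` would be commutative, yet it contains `A` and a reflection `B`; so `Z = -1`. Hence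
`A` has trace `0` and determinant `1`, `B` has determinant `-1` and anticommutes with `A`, and
both generators preserve the form `J A`.
-/

local notation "Mat₂" => Matrix (Fin 2) (Fin 2) ℂ

section Forms

variable {Γ : Type*} [Group Γ] (r : Γ →* GL (Fin 2) ℂ) (χ : Γ →* ℂˣ)

theorem nondeg_iff_det_ne_zero (B : (Fin 2 → ℂ) →ₗ[ℂ] (Fin 2 → ℂ) →ₗ[ℂ] ℂ) :
    Nondeg B ↔ (LinearMap.toMatrix₂' ℂ B).det ≠ 0 :=
  LinearMap.nondegenerate_toMatrix₂'_iff.symm.trans Matrix.nondegenerate_iff_det_ne_zero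

theorem toLinearMap₂'_similitude_iff (N R : Mat₂) (u : ℂ) :
    (∀ v w, Matrix.toLinearMap₂' ℂ N (R *ᵥ v) (R *ᵥ w) = u * Matrix.toLinearMap₂' ℂ N v w) ↔
      Rᵀ * N * R = u • N := by
  rw [← (Matrix.toLinearMap₂' ℂ (S₁ := ℂ) (S₂ := ℂ)).injective.eq_iff,
    ← Matrix.toLinearMap₂'_comp, LinearMap.ext_iff₂, LinearMapClass.map_smul]
  rfl

theorem isSimForm_toLinearMap₂'_iff (N : Mat₂) :
    IsSimForm r χ (Matrix.toLinearMap₂' ℂ N) ↔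
      N.det ≠ 0 ∧ ∀ γ, (r γ : Mat₂)ᵀ * N * r γ = (χ γ : ℂ) • N := by
  simp only [IsSimForm, nondeg_iff_det_ne_zero, LinearMap.toMatrix'_toLinearMap₂',
    toLinearMap₂'_similitude_iff]

theorem exists_isSimForm_iff :
    (∃ B, IsSimForm r χ B) ↔ ∃ N : Mat₂, N.det ≠ 0 ∧ ∀ γ, (r γ : Mat₂)ᵀ * N * r γ = (χ γ : ℂ) • N :=
  (Matrix.toLinearMap₂' ℂ).surjective.exists.trans
    (exists_congr fun N => isSimForm_toLinearMap₂'_iff r χ N)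

end Forms

section Dihedral

variable {H : Type*} [Group H] {n : ℕ}

def zmodPowHom [NeZero n] (a : H) (ha : a ^ n = 1) : Multiplicative (ZMod n) →* H :=
  MonoidHom.mk' (fun i => a ^ (Multiplicative.toAdd i).val) fun i j => by
    simp only [toAdd_mul, ZMod.val_add, ← pow_eq_pow_mod _ ha, pow_add]

theorem pow_mul_eq_mul_inv_pow {a b : H} (hb : b * b = 1) (hab : b * a * b = a⁻¹) (k : ℕ) :
    a ^ k * b = b * (a ^ k)⁻¹ := by
  have hb' : b⁻¹ = b := inv_eq_of_mul_eq_one_right hb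
  have hconj : b * a ^ k * b⁻¹ = (a ^ k)⁻¹ := by rw [← conj_pow, hb', hab, inv_pow]
  rw [← hconj, hb']
  simp only [← mul_assoc, hb, one_mul]

def dihedralHom [NeZero n] (a b : H) (ha : a ^ n = 1) (hb : b * b = 1) (hab : b * a * b = a⁻¹) :
    DihedralGroup n →* H where
  toFun
    | .r i => zmodPowHom a ha (.ofAdd i)
    | .sr i => b * zmodPowHom a ha (.ofAdd i)
  map_one' := map_one (zmodPowHom a ha)
  map_mul' := by
    have hcomm (i : ZMod n) :
        zmodPowHom a ha (.ofAdd i) * b = b * (zmodPowHom a ha (.ofAdd i))⁻¹ :=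
      pow_mul_eq_mul_inv_pow hb hab _
    rintro (i | i) (j | j) <;>
      simp only [DihedralGroup.r_mul_r, DihedralGroup.r_mul_sr, DihedralGroup.sr_mul_r,
        DihedralGroup.sr_mul_sr, sub_eq_neg_add, ofAdd_add, ofAdd_neg, map_mul, map_inv, mul_assoc]
    · rw [← mul_assoc _ b, hcomm, mul_assoc]
    · rw [← mul_assoc _ b, hcomm, ← mul_assoc b, ← mul_assoc b, hb, one_mul]

theorem dihedralHom_r [NeZero n] (a b : H) (ha : a ^ n = 1) (hb : b * b = 1)
    (hab : b * a * b = a⁻¹) (i : ZMod n) : dihedralHom a b ha hb hab (.r i) = a ^ i.val := rfl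

theorem dihedralHom_sr [NeZero n] (a b : H) (ha : a ^ n = 1) (hb : b * b = 1)
    (hab : b * a * b = a⁻¹) (i : ZMod n) :
    dihedralHom a b ha hb hab (.sr i) = b * a ^ i.val := rfl

theorem DihedralGroup.closure_r_one_sr_zero :
    Subgroup.closure {.r 1, .sr 0} = (⊤ : Subgroup (DihedralGroup n)) := by
  have hr (i : ZMod n) : DihedralGroup.r i ∈ Subgroup.closure {.r 1, .sr 0} := by
    rw [← ZMod.intCast_zmod_cast i, ← DihedralGroup.r_one_zpow]
    exact zpow_mem (Subgroup.subset_closure (by simp)) _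
  refine eq_top_iff.2 fun x _ => ?_
  rcases x with i | i
  · exact hr i
  · rw [← zero_add i, ← DihedralGroup.sr_mul_r]
    exact mul_mem (Subgroup.subset_closure (by simp)) (hr i)

theorem DihedralGroup.range_le_of_mem {f : DihedralGroup n →* H} {K : Subgroup H}
    (h₁ : f (.r 1) ∈ K) (h₂ : f (.sr 0) ∈ K) : f.range ≤ K := by
  rw [MonoidHom.range_eq_map, ← DihedralGroup.closure_r_one_sr_zero, MonoidHom.map_closure,
    Subgroup.closure_le, Set.image_pair]
  exact Set.pair_subset h₁ h₂

theorem DihedralGroup.injective_of_map_r_two_ne_one {f : DihedralGroup 4 →* H}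
    (hf : f (.r 2) ≠ 1) : Function.Injective f := by
  refine (injective_iff_map_eq_one f).2 fun x hx => ?_
  by_contra hx1
  -- the centre `r 2` lies in the normal closure of every nontrivial element
  have hcentre : ∀ x : DihedralGroup 4, x ≠ 1 →
      .r 2 = x ∨ .r 2 = x * x ∨ ∃ y, .r 2 = x * y * x⁻¹ * y⁻¹ := by decide
  rcases hcentre x hx1 with h | h | ⟨y, h⟩ <;> apply hf <;> simp [h, hx]

end Dihedral

theorem mul_self_eq_trace_smul_sub_det_smul (X : Mat₂) : X * X = X.trace • X - X.det • 1 := by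
  ext i j
  fin_cases i <;> fin_cases j <;>
    simp [Matrix.mul_apply, Fin.sum_univ_two, Matrix.trace_fin_two, Matrix.det_fin_two] <;> ring

theorem mul_add_mul_swap_eq (X Y : Mat₂) :
    X * Y + Y * X = X.trace • Y + Y.trace • X + ((X * Y).trace - X.trace * Y.trace) • 1 := by
  ext i j
  fin_cases i <;> fin_cases j <;>
    simp [Matrix.mul_apply, Fin.sum_univ_two, Matrix.trace_fin_two] <;> ring

theorem smul_one_injective : Function.Injective fun c : ℂ => c • (1 : Mat₂) :=
  smul_left_injective ℂ one_ne_zero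

theorem trace_eq_zero_of_mul_self_eq_smul_one {X : Mat₂} {c : ℂ} (hX : X * X = c • 1)
    (hscalar : ∀ d : ℂ, X ≠ d • 1) : X.trace = 0 := by
  by_contra htr
  apply hscalar ((X.trace)⁻¹ * (c + X.det))
  rw [mul_smul, add_smul, ← hX, mul_self_eq_trace_smul_sub_det_smul, sub_add_cancel, smul_smul,
    inv_mul_cancel₀ htr, one_smul]

theorem det_eq_neg_of_mul_self_eq_smul_one {X : Mat₂} {c : ℂ} (hX : X * X = c • 1)
    (htr : X.trace = 0) : X.det = -c := by
  rw [mul_self_eq_trace_smul_sub_det_smul, htr, zero_smul, zero_sub, ← neg_smul] at hX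
  linear_combination -smul_one_injective hX

theorem eq_smul_one_add_smul_of_commute {X Z : Mat₂} (hZ : Z * Z = 1) (htr : Z.trace = 0)
    (hXZ : X * Z = Z * X) : X = (X.trace / 2) • 1 + ((X * Z).trace / 2) • Z := by
  have hpol := mul_add_mul_swap_eq X Z
  rw [← hXZ, htr, zero_smul, add_zero, mul_zero, sub_zero, ← two_smul ℂ] at hpol
  calc X = (2 : ℂ)⁻¹ • ((2 : ℂ) • (X * Z)) * Z := by
        rw [smul_smul, inv_mul_cancel₀ two_ne_zero, one_smul, mul_assoc, hZ, mul_one]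
    _ = _ := by
        rw [hpol, smul_mul_assoc, add_mul, smul_mul_assoc, smul_mul_assoc, hZ, one_mul]
        module

/-- The Gram matrix of the bilinear form `(v, w) ↦ det [v w]`. -/
def detForm : Mat₂ := !![0, 1; -1, 0]

theorem det_detForm : detForm.det = 1 := by simp [detForm, Matrix.det_fin_two]

theorem transpose_mul_detForm_mul (R : Mat₂) : Rᵀ * detForm * R = R.det • detForm := by
  ext i j
  fin_cases i <;> fin_cases j <;>
    simp [detForm, Matrix.mul_apply, Fin.sum_univ_two, Matrix.det_fin_two] <;> ring

theorem mul_detForm_mul_transpose (R : Mat₂) : R * detForm * Rᵀ = R.det • detForm := by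
  simpa using transpose_mul_detForm_mul Rᵀ

theorem sub_transpose_eq_smul_detForm (M : Mat₂) : M - Mᵀ = (M 0 1 - M 1 0) • detForm := by
  ext i j
  fin_cases i <;> fin_cases j <;> simp [detForm]

theorem trace_detForm_mul_of_transpose_eq {M : Mat₂} (hM : Mᵀ = M) :
    (detForm * M).trace = 0 := by
  have h : M 1 0 = M 0 1 := by simpa using congrFun (congrFun hM 0) 1
  simp [detForm, Matrix.trace_fin_two, Matrix.vecMul, dotProduct, h]

structure IsAnticommPair (S T : Mat₂) : Prop where
  mul_self_left : S * S = 1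
  mul_self_right : T * T = 1
  anticomm : S * T = -(T * S)

namespace IsAnticommPair

variable {S T X Y : Mat₂} (h : IsAnticommPair S T)
include h

theorem symm : IsAnticommPair T S :=
  ⟨h.mul_self_right, h.mul_self_left, by rw [h.anticomm, neg_neg]⟩

theorem trace_left : S.trace = 0 := by
  have hTST : T * S * T = -S := by
    rw [← neg_neg (T * S), ← h.anticomm, neg_mul, mul_assoc, h.mul_self_right, mul_one]
  have hneg : S.trace = -S.trace := by
    rw [← Matrix.trace_neg, ← hTST, Matrix.trace_mul_cycle, h.mul_self_right, one_mul]
  linear_combination hneg / 2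

theorem det_left : S.det = -1 := by
  simpa using det_eq_neg_of_mul_self_eq_smul_one (c := 1) (by rw [h.mul_self_left, one_smul])
    h.trace_left

theorem eq_smul_one_of_commute (hS : S * X = X * S) (hT : T * X = X * T) :
    X = (X.trace / 2) • 1 := by
  have hX := eq_smul_one_add_smul_of_commute h.mul_self_left h.trace_left hS.symm
  set β := (X * S).trace / 2
  suffices hβ : β = 0 by rwa [hβ, zero_smul, add_zero] at hX
  have hTS : (2 * β) • (T * S) = 0 := by
    rw [hX] at hT
    simp only [mul_add, add_mul, mul_smul_comm, smul_mul_assoc, mul_one, one_mul,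
      add_right_inj, h.anticomm] at hT
    rw [smul_neg, eq_neg_iff_add_eq_zero] at hT
    rw [mul_smul, two_smul, hT]
  have hTS0 : T * S ≠ 0 := by
    intro h0
    have hinv : T * S * (S * T) = 1 := by
      rw [mul_assoc, ← mul_assoc S, h.mul_self_left, one_mul, h.mul_self_right]
    rw [h0, zero_mul] at hinv
    exact zero_ne_one hinv
  simpa using (smul_eq_zero.1 hTS).resolve_right hTS0

theorem exists_eq_smul_left (hS : S * X = X * S) (hT : T * X = -(X * T)) :
    ∃ μ : ℂ, X = μ • S := by
  have hXS := h.eq_smul_one_of_commute (X := X * S) (by rw [← mul_assoc, hS])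
    (by rw [← mul_assoc, hT, neg_mul, mul_assoc, h.symm.anticomm, mul_neg, neg_neg, mul_assoc])
  refine ⟨(X * S).trace / 2, ?_⟩
  calc X = X * S * S := by rw [mul_assoc, h.mul_self_left, mul_one]
    _ = ((X * S).trace / 2) • 1 * S := congrArg (· * S) hXS
    _ = _ := smul_one_mul _ _

theorem eq_one_or_eq_neg_one (hS : S * X = X * S) (hT : T * X = X * T) (hdet : X.det = 1) :
    X = 1 ∨ X = -1 := by
  have hX := h.eq_smul_one_of_commute hS hT
  rw [hX, Matrix.det_smul, Fintype.card_fin, Matrix.det_one, mul_one, sq,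
    mul_self_eq_one_iff] at hdet
  rcases hdet with hc | hc <;> rw [hX, hc] <;> simp

theorem mul_self_eq_neg_det_smul_one (hS : S * X = X * S) (hT : T * X = -(X * T)) :
    X * X = (-X.det) • 1 := by
  obtain ⟨μ, rfl⟩ := h.exists_eq_smul_left hS hT
  rw [smul_mul_smul_comm, h.mul_self_left, Matrix.det_smul, h.det_left]
  simp [sq]

theorem mul_anticomm_of_semicommute (hXS : S * X = X * S) (hXT : T * X = -(X * T))
    (hYS : S * Y = -(Y * S)) (hYT : T * Y = Y * T) : Y * X = -(X * Y) := by
  obtain ⟨μ, rfl⟩ := h.exists_eq_smul_left hXS hXT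
  obtain ⟨ν, rfl⟩ := h.symm.exists_eq_smul_left hYT hYS
  rw [smul_mul_smul_comm, smul_mul_smul_comm, h.symm.anticomm, smul_neg, mul_comm]

theorem dihedral_relations {a b : GL (Fin 2) ℂ} (haS : S * a = a * S) (haT : T * a = -(a * T))
    (ha : (a : Mat₂).det = 1) (hbS : S * b = -(b * S)) (hbT : T * b = b * T)
    (hb : (b : Mat₂).det = -1) : a * a = -1 ∧ b * b = 1 ∧ b * a * b = a⁻¹ := by
  have ha2 : a * a = -1 := Units.ext <| by
    simpa [ha] using h.mul_self_eq_neg_det_smul_one haS haT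
  have hb2 : b * b = 1 := Units.ext <| by
    simpa [hb] using h.symm.mul_self_eq_neg_det_smul_one hbT hbS
  have hba : b * a = -(a * b) := Units.ext <| by
    simpa using h.mul_anticomm_of_semicommute haS haT hbS hbT
  refine ⟨ha2, hb2, ?_⟩
  rw [hba, neg_mul, mul_assoc, hb2, mul_one, eq_inv_iff_mul_eq_one, neg_mul, ha2, neg_neg]

end IsAnticommPair

theorem transpose_eq_of_similitude {M R : Mat₂} {u : ℂ} (hM : Rᵀ * M * R = u • M)
    (hu : R.det ≠ u) : Mᵀ = M := by
  have hMt : Rᵀ * Mᵀ * R = u • Mᵀ := by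
    simpa [Matrix.transpose_mul, mul_assoc] using congrArg Matrix.transpose hM
  have hskew : Rᵀ * (M - Mᵀ) * R = u • (M - Mᵀ) := by
    rw [mul_sub, sub_mul, hM, hMt, smul_sub]
  rw [sub_transpose_eq_smul_detForm, Matrix.mul_smul, Matrix.smul_mul, transpose_mul_detForm_mul,
    smul_smul, smul_smul] at hskew
  have hcoeff : (M 0 1 - M 1 0) * (R.det - u) = 0 := by
    have h01 := congrFun (congrFun hskew 0) 1
    simp [detForm] at h01
    linear_combination h01
  have hc := (mul_eq_zero.1 hcoeff).resolve_right (sub_ne_zero.2 hu)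
  rw [eq_comm, ← sub_eq_zero, sub_transpose_eq_smul_detForm, hc, zero_smul]

theorem smul_detForm_mul_mul_of_similitude {M R : Mat₂} {u : ℂ} (hM : Rᵀ * M * R = u • M) :
    R.det • (detForm * M * R) = u • (R * (detForm * M)) := by
  calc R.det • (detForm * M * R) = R * detForm * Rᵀ * M * R := by
        rw [mul_detForm_mul_transpose, smul_mul_assoc, smul_mul_assoc]
    _ = R * detForm * (Rᵀ * M * R) := by simp only [mul_assoc]
    _ = u • (R * (detForm * M)) := by rw [hM, mul_smul_comm, mul_assoc]

theorem exists_involution_smul_detForm_mul {M : Mat₂} (hM : Mᵀ = M) (hdet : M.det ≠ 0) :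
    ∃ c : ℂ, c • (detForm * M) * (c • (detForm * M)) = 1 := by
  obtain ⟨z, hz⟩ := IsAlgClosed.exists_pow_nat_eq (-M.det) two_pos
  have hz0 : z ≠ 0 := by rintro rfl; simp_all
  refine ⟨z⁻¹, ?_⟩
  rw [smul_mul_smul_comm, mul_self_eq_trace_smul_sub_det_smul,
    trace_detForm_mul_of_transpose_eq hM, zero_smul, zero_sub, Matrix.det_mul, det_detForm,
    one_mul, ← neg_smul, smul_smul, ← hz]
  field_simp
  simp

theorem exists_involution_semicommute {Γ : Type*} [Group Γ] (r : Γ →* GL (Fin 2) ℂ)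
    (δ χ : Γ →* ℂˣ) (hdet : ∀ γ, (r γ : Mat₂).det = δ γ) {M : Mat₂} (hM0 : M.det ≠ 0)
    (hM : ∀ γ, (r γ : Mat₂)ᵀ * M * r γ = (χ γ : ℂ) • M) (hχ : ∃ γ, (r γ : Mat₂).det ≠ χ γ) :
    ∃ T : Mat₂, T * T = 1 ∧ T.trace = 0 ∧ ∀ γ, T * r γ = ((χ / δ) γ : ℂ) • (r γ * T) := by
  obtain ⟨γ₀, hγ₀⟩ := hχ
  have hsym := transpose_eq_of_similitude (hM γ₀) hγ₀
  obtain ⟨c, hc⟩ := exists_involution_smul_detForm_mul hsym hM0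
  refine ⟨c • (detForm * M), hc, ?_, fun γ => ?_⟩
  · rw [Matrix.trace_smul, trace_detForm_mul_of_transpose_eq hsym, smul_zero]
  · have h := smul_detForm_mul_mul_of_similitude (hM γ)
    rw [hdet] at h
    refine smul_right_injective _ (δ γ).ne_zero ?_
    simp only [smul_mul_assoc, mul_smul_comm, smul_comm (δ γ : ℂ) c, h, smul_smul,
      MonoidHom.div_apply, Units.val_div_eq_div_val]
    congr 1
    field_simp

theorem anticomm_of_semicommute {S T R : Mat₂} {a b : ℂ} (hS : S.trace = 0) (hT : T.trace = 0)
    (hR : R ≠ 0) (hab : a * b ≠ 1) (hSR : S * R = a • (R * S)) (hTR : T * R = b • (R * T)) :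
    S * T = -(T * S) := by
  have hpol := mul_add_mul_swap_eq S T
  rw [hS, hT, zero_smul, zero_smul, zero_add, zero_add, zero_mul, sub_zero] at hpol
  have hsemi : (S * T + T * S) * R = (a * b) • (R * (S * T + T * S)) := by
    simp only [add_mul, mul_add, mul_assoc, hTR, hSR, mul_smul_comm, smul_add]
    simp only [← mul_assoc, hSR, hTR, smul_mul_assoc, smul_smul]
    rw [mul_comm b a, add_comm]
  rw [hpol, smul_one_mul, mul_smul_one, smul_smul, ← sub_eq_zero, ← sub_smul] at hsemi
  have hc : (S * T).trace = 0 := by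
    have hcR := (smul_eq_zero.1 hsemi).resolve_right hR
    have h1 : (1 - a * b) * (S * T).trace = 0 := by linear_combination hcR
    exact (mul_eq_zero.1 h1).resolve_left (sub_ne_zero.2 (Ne.symm hab))
  rw [hc, zero_smul] at hpol
  exact eq_neg_of_add_eq_zero_left hpol

theorem exists_apply_eq_one_and_eq_neg_one {Γ M : Type*} [Group Γ] [Monoid M] [HasDistribNeg M]
    {ψ φ : Γ →* M} (hψ : ∀ γ, ψ γ = 1 ∨ ψ γ = -1) (hφ : ∀ γ, φ γ = 1 ∨ φ γ = -1)
    (hφ1 : ∃ γ, φ γ ≠ 1) (hψφ : ∃ γ, ψ γ ≠ φ γ) : ∃ γ, ψ γ = 1 ∧ φ γ = -1 := by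
  obtain ⟨a, ha⟩ := hφ1
  obtain ⟨b, hb⟩ := hψφ
  have hφa := (hφ a).resolve_left ha
  rcases hψ a with hψa | hψa
  · exact ⟨a, hψa, hφa⟩
  rcases hψ b with hψb | hψb <;> rcases hφ b with hφb | hφb
  · exact absurd (hψb.trans hφb.symm) hb
  · exact ⟨b, hψb, hφb⟩
  · exact ⟨a * b, by simp [hψa, hψb], by simp [hφa, hφb]⟩
  · exact absurd (hψb.trans hφb.symm) hb

theorem range_le_of_apply_mem {Γ G : Type*} [Group Γ] [Group G] (r : Γ →* G) (K : Subgroup G)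
    {δ χ : Γ →* ℂˣ} (hδ : ∀ γ, δ γ = 1 ∨ δ γ = -1) (hχ : ∀ γ, χ γ = 1 ∨ χ γ = -1)
    {γ₁ γ₂ : Γ} (h₁ : δ γ₁ = 1 ∧ χ γ₁ = -1) (h₂ : δ γ₂ = -1 ∧ χ γ₂ = 1)
    (hr₁ : r γ₁ ∈ K) (hr₂ : r γ₂ ∈ K) (hker : ∀ γ, δ γ = 1 → χ γ = 1 → r γ ∈ K) :
    r.range ≤ K := by
  rintro _ ⟨γ, rfl⟩
  rcases hδ γ with hδγ | hδγ <;> rcases hχ γ with hχγ | hχγ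
  · exact hker γ hδγ hχγ
  · simpa using mul_mem (hker (γ * γ₁⁻¹) (by simp [hδγ, h₁.1]) (by simp [hχγ, h₁.2])) hr₁
  · simpa using mul_mem (hker (γ * γ₂⁻¹) (by simp [hδγ, h₂.1]) (by simp [hχγ, h₂.2])) hr₂
  · simpa [mul_assoc] using mul_mem (mul_mem (hker (γ * γ₂⁻¹ * γ₁⁻¹)
      (by simp [hδγ, h₁.1, h₂.1]) (by simp [hχγ, h₁.2, h₂.2])) hr₁) hr₂

theorem nonempty_range_mulEquiv_dihedral {Γ : Type*} [Group Γ] (r : Γ →* GL (Fin 2) ℂ)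
    {S T : Mat₂} (hST : IsAnticommPair S T) {δ χ : Γ →* ℂˣ}
    (hdet : ∀ γ, (r γ : Mat₂).det = δ γ) (hδ : ∀ γ, δ γ = 1 ∨ δ γ = -1)
    (hχ : ∀ γ, χ γ = 1 ∨ χ γ = -1) (hδ1 : ∃ γ, δ γ ≠ 1) (hχ1 : ∃ γ, χ γ ≠ 1)
    (hδχ : ∃ γ, δ γ ≠ χ γ) (hS : ∀ γ, S * r γ = (δ γ : ℂ) • (r γ * S))
    (hT : ∀ γ, T * r γ = (χ γ : ℂ) • (r γ * T)) :
    Nonempty (r.range ≃* DihedralGroup 4) := by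
  obtain ⟨γ₁, hδ₁, hχ₁⟩ := exists_apply_eq_one_and_eq_neg_one hδ hχ hχ1 hδχ
  obtain ⟨γ₂, hχ₂, hδ₂⟩ :=
    exists_apply_eq_one_and_eq_neg_one hχ hδ hδ1 (hδχ.imp fun _ => Ne.symm)
  obtain ⟨ha2, hb2, hbab⟩ := hST.dihedral_relations (a := r γ₁) (b := r γ₂)
    (by simpa [hδ₁] using hS γ₁) (by simpa [hχ₁] using hT γ₁) (by simp [hdet, hδ₁])
    (by simpa [hδ₂] using hS γ₂) (by simpa [hχ₂] using hT γ₂) (by simp [hdet, hδ₂])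
  have ha4 : r γ₁ ^ 4 = 1 := by
    rw [show 4 = 2 * 2 from rfl, pow_mul, sq (r γ₁), ha2, neg_one_sq]
  set f := dihedralHom (r γ₁) (r γ₂) ha4 hb2 hbab with hf_def
  have hf1 : f (.r 1) = r γ₁ := by
    rw [hf_def, dihedralHom_r, show (1 : ZMod 4).val = 1 from rfl, pow_one]
  have hf2 : f (.r 2) = -1 := by
    rw [hf_def, dihedralHom_r, show (2 : ZMod 4).val = 2 from rfl, sq, ha2]
  have hfs : f (.sr 0) = r γ₂ := by
    rw [hf_def, dihedralHom_sr, ZMod.val_zero, pow_zero, mul_one]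
  have hf : Function.Injective f := by
    refine DihedralGroup.injective_of_map_r_two_ne_one fun h => ?_
    have h00 := congrArg (fun g : GL (Fin 2) ℂ => (g : Mat₂) 0 0) (hf2.symm.trans h)
    norm_num at h00
  have hrange : r.range = f.range := by
    refine le_antisymm (range_le_of_apply_mem r f.range hδ hχ ⟨hδ₁, hχ₁⟩ ⟨hδ₂, hχ₂⟩
      ⟨.r 1, hf1⟩ ⟨.sr 0, hfs⟩ fun γ hδγ hχγ => ?_) ?_
    · rcases hST.eq_one_or_eq_neg_one (by simpa [hδγ] using hS γ) (by simpa [hχγ] using hT γ)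
        (by rw [hdet, hδγ, Units.val_one]) with h | h
      · exact (Units.ext h : r γ = 1) ▸ one_mem _
      · exact ⟨.r 2, hf2.trans (Units.ext h.symm)⟩
    · exact DihedralGroup.range_le_of_mem (hf1 ▸ ⟨γ₁, rfl⟩) (hfs ▸ ⟨γ₂, rfl⟩)
  exact ⟨(MulEquiv.subgroupCongr hrange).trans (MonoidHom.ofInjective hf).symm⟩

theorem nonempty_range_mulEquiv_dihedral_of_similitudes {Γ : Type*} [Group Γ]
    (r : Γ →* GL (Fin 2) ℂ) (η : Γ →* ℂˣ) (hdet : ∃ γ, (r γ : Mat₂).det ≠ η γ)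
    (hdet1 : ∃ γ, (r γ : Mat₂).det ≠ 1) (hdet2 : ∀ γ, (r γ : Mat₂).det ^ 2 = 1)
    (hη1 : ∃ γ, η γ ≠ 1) (hη2 : ∀ γ, η γ * η γ = 1) {M N : Mat₂} (hM0 : M.det ≠ 0)
    (hM : ∀ γ, (r γ : Mat₂)ᵀ * M * r γ = (η γ : ℂ) • M) (hN0 : N.det ≠ 0)
    (hN : ∀ γ, (r γ : Mat₂)ᵀ * N * r γ = N) :
    Nonempty (r.range ≃* DihedralGroup 4) := by
  set δ := Matrix.GeneralLinearGroup.det.comp r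
  have hdetδ (γ : Γ) : (r γ : Mat₂).det = δ γ := rfl
  have hδinv (γ : Γ) : (δ γ)⁻¹ = δ γ := inv_eq_of_mul_eq_one_right <| Units.ext <| by
    rw [Units.val_mul, ← hdetδ, ← sq, hdet2 γ, Units.val_one]
  have hδ (γ : Γ) : δ γ = 1 ∨ δ γ = -1 := (Units.inv_eq_self_iff _).1 (hδinv γ)
  have hη (γ : Γ) : η γ = 1 ∨ η γ = -1 :=
    (Units.inv_eq_self_iff _).1 (inv_eq_of_mul_eq_one_right (hη2 γ))
  have hχ (γ : Γ) : (η / δ) γ = 1 ∨ (η / δ) γ = -1 := by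
    rcases hδ γ with h | h <;> rcases hη γ with h' | h' <;> simp [h, h']
  obtain ⟨T, hT2, hTtr, hT⟩ := exists_involution_semicommute r δ η hdetδ hM0 hM hdet
  obtain ⟨S, hS2, hStr, hS⟩ :=
    exists_involution_semicommute r δ 1 hdetδ hN0 (by simpa using hN) (by simpa using hdet1)
  obtain ⟨γ, hγ⟩ := hη1
  have hST : IsAnticommPair S T := ⟨hS2, hT2, anticomm_of_semicommute hStr hTtr (r γ).ne_zero
    (by rcases hδ γ with h | h <;> rcases hη γ with h' | h' <;> simp_all <;> norm_num)
    (hS γ) (hT γ)⟩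
  refine nonempty_range_mulEquiv_dihedral r hST hdetδ hδ hχ ?_ ?_ ⟨γ, ?_⟩
    (fun γ => by simpa [hδinv] using hS γ) hT
  · exact hdet1.imp fun γ h hγ => h (by rw [hdetδ, hγ, Units.val_one])
  · exact hdet.imp fun γ h hγ => h (by rw [hdetδ, ← div_eq_one.1 hγ])
  · rcases hδ γ with h | h <;> rcases hη γ with h' | h' <;> simp_all

def formStabilizer (N : Mat₂) : Subgroup (GL (Fin 2) ℂ) where
  carrier := {g | (g : Mat₂)ᵀ * N * g = N}
  one_mem' := by simp
  mul_mem' {g h} (hg : (g : Mat₂)ᵀ * N * g = N) (hh : (h : Mat₂)ᵀ * N * h = N) := by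
    change ((g * h : GL (Fin 2) ℂ) : Mat₂)ᵀ * N * (g * h : GL (Fin 2) ℂ) = N
    calc ((g * h : GL (Fin 2) ℂ) : Mat₂)ᵀ * N * (g * h : GL (Fin 2) ℂ)
        = (h : Mat₂)ᵀ * ((g : Mat₂)ᵀ * N * g) * h := by
          simp only [Units.val_mul, Matrix.transpose_mul, mul_assoc]
      _ = N := by rw [hg, hh]
  inv_mem' {g} (hg : (g : Mat₂)ᵀ * N * g = N) := by
    change ((g⁻¹ : GL (Fin 2) ℂ) : Mat₂)ᵀ * N * (g⁻¹ : GL (Fin 2) ℂ) = N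
    calc ((g⁻¹ : GL (Fin 2) ℂ) : Mat₂)ᵀ * N * (g⁻¹ : GL (Fin 2) ℂ)
        = ((g : Mat₂) * ((g⁻¹ : GL (Fin 2) ℂ) : Mat₂))ᵀ * N *
            ((g : Mat₂) * ((g⁻¹ : GL (Fin 2) ℂ) : Mat₂)) := by
          conv_lhs => rw [← hg]
          simp only [Matrix.transpose_mul, mul_assoc]
      _ = N := by rw [Units.mul_inv, Matrix.transpose_one, one_mul, mul_one]

theorem transpose_mul_detForm_mul_mul_of_semicommute {X R : Mat₂} {c : ℂ}
    (h : X * R = c • (R * X)) : Rᵀ * (detForm * X) * R = (c * R.det) • (detForm * X) := by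
  rw [mul_assoc, mul_assoc, h, mul_smul_comm, mul_smul_comm, ← mul_assoc, ← mul_assoc,
    transpose_mul_detForm_mul, smul_mul_assoc, smul_smul, mul_comm]

theorem eq_neg_one_of_mul_self_eq_one {Z A B : Mat₂} (hZ : Z * Z = 1) (hZ1 : Z ≠ 1)
    (hA : A * Z = Z * A) (hB : B * Z = Z * B) (hAB : A * B ≠ B * A) : Z = -1 := by
  by_cases hscalar : ∃ d : ℂ, Z = d • 1
  · obtain ⟨d, rfl⟩ := hscalar
    have hd : d * d = 1 := smul_one_injective <| by
      simpa only [smul_mul_smul_comm, mul_one, one_smul] using hZ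
    rcases mul_self_eq_one_iff.1 hd with rfl | rfl
    · exact absurd (one_smul ℂ 1) hZ1
    · exact neg_one_smul ℂ 1
  · push Not at hscalar
    have htr := trace_eq_zero_of_mul_self_eq_smul_one (c := 1) (by rw [hZ, one_smul]) hscalar
    rw [eq_smul_one_add_smul_of_commute hZ htr hA, eq_smul_one_add_smul_of_commute hZ htr hB] at hAB
    exact absurd (by simp only [add_mul, mul_add, smul_mul_smul_comm, one_mul, mul_one]; module) hAB

theorem detForm_mul_invariant_of_dihedral_relations {A B : Mat₂} (hZ2 : A * A * (A * A) = 1)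
    (hZ1 : A * A ≠ 1) (hZB : B * (A * A) = A * A * B) (hAB : A * B ≠ B * A) (hB2 : B * B = 1)
    (hBAB : B * A * B = A * A * A) :
    (detForm * A).det ≠ 0 ∧ Aᵀ * (detForm * A) * A = detForm * A ∧
      Bᵀ * (detForm * A) * B = detForm * A := by
  have hdet {X : Mat₂} {c : ℂ} (hX : X * X = c • 1) (hscalar : ∀ d : ℂ, X ≠ d • 1) :
      X.det = -c :=
    det_eq_neg_of_mul_self_eq_smul_one hX (trace_eq_zero_of_mul_self_eq_smul_one hX hscalar)
  have hZ : A * A = -1 := eq_neg_one_of_mul_self_eq_one hZ2 hZ1 (mul_assoc A A A).symm hZB hAB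
  have hdetA : A.det = 1 := by
    simpa using hdet (c := -1) (by rw [hZ, neg_one_smul])
      fun d hd => hAB (by rw [hd, smul_one_mul, mul_smul_one])
  have hdetB : B.det = -1 := hdet (c := 1) (by rw [hB2, one_smul])
    fun d hd => hAB (by rw [hd, smul_one_mul, mul_smul_one])
  have hBA : B * A = -(A * B) := by
    rw [hZ, neg_one_mul] at hBAB
    rw [← mul_one (B * A), ← hB2, ← mul_assoc, hBAB, neg_mul]
  refine ⟨by rw [Matrix.det_mul, det_detForm, hdetA]; norm_num, ?_, ?_⟩
  · rw [transpose_mul_detForm_mul_mul_of_semicommute (c := 1) (by rw [one_smul]), hdetA, one_mul,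
      one_smul]
  · rw [transpose_mul_detForm_mul_mul_of_semicommute (c := -1) (by rw [hBA, neg_one_smul, neg_neg]),
      hdetB]
    norm_num

theorem exists_range_le_formStabilizer {f : DihedralGroup 4 →* GL (Fin 2) ℂ}
    (hf : Function.Injective f) : ∃ N : Mat₂, N.det ≠ 0 ∧ f.range ≤ formStabilizer N := by
  have rel (x y : DihedralGroup 4) (h : x = y) : (f x : Mat₂) = f y := h ▸ rfl
  have nrel (x y : DihedralGroup 4) (h : x ≠ y) : (f x : Mat₂) ≠ f y :=
    fun hxy => h (hf (Units.ext hxy))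
  obtain ⟨hdet, hA, hB⟩ := detForm_mul_invariant_of_dihedral_relations
    (A := f (.r 1)) (B := f (.sr 0))
    (by simpa only [map_mul, Units.val_mul, map_one, Units.val_one] using
      rel (.r 1 * .r 1 * (.r 1 * .r 1)) 1 (by decide))
    (by simpa only [map_mul, Units.val_mul, map_one, Units.val_one] using
      nrel (.r 1 * .r 1) 1 (by decide))
    (by simpa only [map_mul, Units.val_mul] using
      rel (.sr 0 * (.r 1 * .r 1)) (.r 1 * .r 1 * .sr 0) (by decide))
    (by simpa only [map_mul, Units.val_mul] using
      nrel (.r 1 * .sr 0) (.sr 0 * .r 1) (by decide))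
    (by simpa only [map_mul, Units.val_mul, map_one, Units.val_one] using
      rel (.sr 0 * .sr 0) 1 (by decide))
    (by simpa only [map_mul, Units.val_mul] using
      rel (.sr 0 * .r 1 * .sr 0) (.r 1 * .r 1 * .r 1) (by decide))
  exact ⟨_, hdet, DihedralGroup.range_le_of_mem hA hB⟩

/-- Let `r` be a 2-dimensional complex representation with an `η`-similitude form, where
`det∘r` and `η` are distinct characters of order 2.  Then `r` is self-dual (carries a
nondegenerate invariant bilinear form) if and only if its image is isomorphic to the
dihedral group of order 8. -/
theorem selfdual_iff_image_dihedral
    {Γ : Type*} [Group Γ] (r : Γ →* GL (Fin 2) ℂ) (η : Γ →* ℂˣ)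
    (hdet : ∃ γ : Γ, (r γ : Matrix (Fin 2) (Fin 2) ℂ).det ≠ (η γ : ℂ))
    (hform : ∃ B, IsSimForm r η B)
    (hdet_ord : (∃ γ : Γ, (r γ : Matrix (Fin 2) (Fin 2) ℂ).det ≠ 1) ∧
      (∀ γ : Γ, (r γ : Matrix (Fin 2) (Fin 2) ℂ).det ^ 2 = 1))
    (hη_ord : (∃ γ : Γ, η γ ≠ 1) ∧ (∀ γ : Γ, η γ * η γ = 1)) :
    (∃ B, IsSimForm r (1 : Γ →* ℂˣ) B) ↔
      Nonempty (r.range ≃* DihedralGroup 4) := by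
  obtain ⟨M, hM0, hM⟩ := (exists_isSimForm_iff r η).1 hform
  rw [exists_isSimForm_iff]
  constructor
  · rintro ⟨N, hN0, hN⟩
    exact nonempty_range_mulEquiv_dihedral_of_similitudes r η hdet hdet_ord.1 hdet_ord.2
      hη_ord.1 hη_ord.2 hM0 hM hN0 fun γ => by simpa using hN γ
  · rintro ⟨e⟩
    obtain ⟨N, hN0, hN⟩ := exists_range_le_formStabilizer (f := r.range.subtype.comp e.symm)
      (r.range.subtype_injective.comp e.symm.injective)
    refine ⟨N, hN0, fun γ => ?_⟩
    rw [MonoidHom.one_apply, Units.val_one, one_smul]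
    exact hN (show r γ ∈ _ from ⟨e ⟨r γ, γ, rfl⟩, by simp⟩)
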